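/- arXiv:1611.02867 — 3 statements merged into one kernel-verified Lean document; each statement's English description precedes it below -/
import Mathlib

section
/- Let A_0, ..., A_{n-1} be finite idempotent algebras of a common signature sharing a common Taylor term, and let α be a proper nonempty subset of {0,...,n-1} such that A_i has a cube term for every i ∈ α, and A_j has a sink s_j ∈ A_j for every j ∉ α. If R ≤_sd A_0 × ... × A_{n-1} is a subdirect product, then every tuple x with (x(i))_{i∈α} ∈ Proj_α R and x(j) = s_j for all j ∉ α belongs to R; i.e., the set X := Proj_α R × {(s_j)_{j∉α}} is a subuniverse of R. -/
/-- A (functional) signature: a type of operation symbols, each with an arity. -/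
structure Signature where
  ops : Type
  arity : ops → ℕ

/-- Terms of a signature in `n` variables. -/
inductive UTerm (σ : Signature) : ℕ → Type
  | var : ∀ {n}, Fin n → UTerm σ n
  | app : ∀ {n} (f : σ.ops), (Fin (σ.arity f) → UTerm σ n) → UTerm σ n

/-- An algebra of signature `σ` on carrier `A`. -/
structure UAlgebra (σ : Signature) (A : Type) where
  interp : ∀ f : σ.ops, (Fin (σ.arity f) → A) → A

namespace UAlgebra

variable {σ : Signature} {A : Type}

/-- The term operation induced by a term. -/
def eval (Alg : UAlgebra σ A) {n : ℕ} : UTerm σ n → (Fin n → A) → A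
  | .var i, env => env i
  | .app f ts, env => Alg.interp f fun j => Alg.eval (ts j) env

/-- An algebra is idempotent if every basic operation satisfies `f(a,…,a) = a`. -/
def Idempotent (Alg : UAlgebra σ A) : Prop :=
  ∀ (f : σ.ops) (a : A), Alg.interp f (fun _ => a) = a

/-- A congruence: an equivalence relation compatible with the basic operations. -/
def IsCong (Alg : UAlgebra σ A) (θ : A → A → Prop) : Prop :=
  (∀ a, θ a a) ∧ (∀ a b, θ a b → θ b a) ∧ (∀ a b c, θ a b → θ b c → θ a c) ∧
  ∀ (f : σ.ops) (x y : Fin (σ.arity f) → A),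
    (∀ j, θ (x j) (y j)) → θ (Alg.interp f x) (Alg.interp f y)

/-- A subuniverse: a subset closed under the basic operations. -/
def IsSubuniv (Alg : UAlgebra σ A) (B : Set A) : Prop :=
  ∀ (f : σ.ops) (x : Fin (σ.arity f) → A), (∀ j, x j ∈ B) → Alg.interp f x ∈ B

/-- A simple algebra: more than one element, and the only congruences are `0` and `1`. -/
def Simple (Alg : UAlgebra σ A) : Prop :=
  (∃ a b : A, a ≠ b) ∧
  ∀ θ : A → A → Prop, Alg.IsCong θ → (∀ a b, θ a b ↔ a = b) ∨ (∀ a b, θ a b)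

/-- An abelian algebra: for every `(ℓ+m)`-ary term operation `t` and tuples
`a b : Aᶩ`, `u v : Aᵐ`, `t(a,u) = t(a,v) ↔ t(b,u) = t(b,v)`. -/
def Abelian (Alg : UAlgebra σ A) : Prop :=
  ∀ (ℓ m : ℕ) (t : UTerm σ (ℓ + m)) (a b : Fin ℓ → A) (u v : Fin m → A),
    (Alg.eval t (Fin.append a u) = Alg.eval t (Fin.append a v) ↔
      Alg.eval t (Fin.append b u) = Alg.eval t (Fin.append b v))

/-- `B` is an absorbing subalgebra of `A` with respect to the `k`-ary term `t`:
`B` is a (nonempty) subuniverse, and applying `t` to arguments all of which lie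
in `B` except possibly one (arbitrary in `A`) lands in `B`. -/
def AbsorbingWith (Alg : UAlgebra σ A) (B : Set A) {k : ℕ} (t : UTerm σ k) : Prop :=
  B.Nonempty ∧ Alg.IsSubuniv B ∧
  ∀ (j : Fin k) (x : Fin k → A), (∀ i, i ≠ j → x i ∈ B) → Alg.eval t x ∈ B

/-- `B ◁ A` : `B` is absorbing with respect to some term. -/
def Absorbing (Alg : UAlgebra σ A) (B : Set A) : Prop :=
  ∃ (k : ℕ) (t : UTerm σ k), Alg.AbsorbingWith B t

/-- `B ◁◁ A` : `B` is minimal among absorbing subuniverses of `A`. -/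
def MinAbsorbing (Alg : UAlgebra σ A) (B : Set A) : Prop :=
  Alg.Absorbing B ∧ ∀ C : Set A, Alg.Absorbing C → C ⊆ B → C = B

/-- A congruence of the subalgebra with universe `R`. -/
def IsCongOn (Alg : UAlgebra σ A) (R : Set A) (θ : A → A → Prop) : Prop :=
  (∀ a ∈ R, θ a a) ∧ (∀ a b, θ a b → θ b a) ∧ (∀ a b c, θ a b → θ b c → θ a c) ∧
  (∀ a b, θ a b → a ∈ R ∧ b ∈ R) ∧
  ∀ (f : σ.ops) (x y : Fin (σ.arity f) → A),
    (∀ j, θ (x j) (y j)) → θ (Alg.interp f x) (Alg.interp f y)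

/-- The join of `θ₁` and `θ₂` in the congruence lattice of the subalgebra `R`
is the top congruence `1_R`. -/
def JoinIsTop (Alg : UAlgebra σ A) (R : Set A) (θ₁ θ₂ : A → A → Prop) : Prop :=
  ∀ θ : A → A → Prop, Alg.IsCongOn R θ →
    (∀ a b, θ₁ a b → θ a b) → (∀ a b, θ₂ a b → θ a b) →
    ∀ a ∈ R, ∀ b ∈ R, θ a b

end UAlgebra

/-- Interpreting a `Fin 2`-indexed choice of the variables `x`, `y`. -/
def pick {A : Type} (x y : A) : Fin 2 → A := fun b => if b = 0 then x else y

/-- `t` is a common Taylor term for the family `Alg`: it is idempotent in every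
algebra of the family, and for each coordinate `i` there is an identity
`t(u_0,…,u_{n-1}) ≈ t(v_0,…,v_{n-1})` (each `u_j, v_j ∈ {x,y}`, `u_i = x`,
`v_i = y`) holding in every algebra of the family. -/
def IsTaylorFamily {σ : Signature} {ι : Type} {A : ι → Type}
    (Alg : ∀ i, UAlgebra σ (A i)) {n : ℕ} (t : UTerm σ n) : Prop :=
  ∃ u v : Fin n → Fin n → Fin 2,
    (∀ i : Fin n, u i i = 0 ∧ v i i = 1) ∧
    ∀ k : ι,
      (∀ a : A k, (Alg k).eval t (fun _ => a) = a) ∧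
      ∀ (i : Fin n) (x y : A k),
        (Alg k).eval t (fun j => pick x y (u i j)) =
        (Alg k).eval t (fun j => pick x y (v i j))

/-- Taylor term of a single algebra. -/
def IsTaylorFor {σ : Signature} {A : Type} (Alg : UAlgebra σ A) {n : ℕ}
    (t : UTerm σ n) : Prop :=
  IsTaylorFamily (fun _ : PUnit => Alg) t

/-- The product algebra of a family of algebras of a common signature. -/
def prodAlgebra {σ : Signature} {ι : Type} {A : ι → Type}
    (Alg : ∀ i, UAlgebra σ (A i)) : UAlgebra σ (∀ i, A i) :=
  ⟨fun f x i => (Alg i).interp f (fun j => x j i)⟩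

/-- `R ≤_sd ∏ A_i` : `R` is a (nonempty) subuniverse of the product whose
coordinate projections are all surjective. -/
def IsSubdirect {σ : Signature} {ι : Type} {A : ι → Type}
    (Alg : ∀ i, UAlgebra σ (A i)) (R : Set (∀ i, A i)) : Prop :=
  R.Nonempty ∧ (prodAlgebra Alg).IsSubuniv R ∧
  ∀ (i : ι) (a : A i), ∃ r ∈ R, r i = a

/-- The kernel `η_s` of the projection of `R` onto the coordinates in `s`,
as a relation (congruence of the subalgebra `R`). -/
def projKer {ι : Type} {A : ι → Type} (R : Set (∀ i, A i)) (s : Set ι) :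
    (∀ i, A i) → (∀ i, A i) → Prop :=
  fun x y => x ∈ R ∧ y ∈ R ∧ ∀ i ∈ s, x i = y i

/-- The kernels of the `i`-th and `j`-th coordinate projections of `R` coincide. -/
def kerEq {ι : Type} {A : ι → Type} (R : Set (∀ i, A i)) (i j : ι) : Prop :=
  ∀ x ∈ R, ∀ y ∈ R, (x i = y i ↔ x j = y j)
/-- A cube term: a `k`-ary idempotent term such that for each coordinate `i`
there is an identity `t(x_1,…,x_k) ≈ y` with each `x_j ∈ {x,y}` and `x_i = x`. -/
def IsCubeTerm {σ : Signature} {A : Type} (Alg : UAlgebra σ A) {k : ℕ}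
    (t : UTerm σ k) : Prop :=
  (∀ a : A, Alg.eval t (fun _ => a) = a) ∧
  ∀ i : Fin k, ∃ u : Fin k → Fin 2, u i = 0 ∧
    ∀ x y : A, Alg.eval t (fun j => pick x y (u j)) = y

/-- A term operation depends on its `j`-th argument. -/
def UDependsOn {σ : Signature} {A : Type} (Alg : UAlgebra σ A) {k : ℕ}
    (t : UTerm σ k) (j : Fin k) : Prop :=
  ∃ (c : Fin k → A) (x y : A),
    Alg.eval t (Function.update c j x) ≠ Alg.eval t (Function.update c j y)

/-- `s` is a sink for `A`: every term operation depending on its `j`-th argument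
returns `s` whenever `s` is placed in position `j`. -/
def IsSink {σ : Signature} {A : Type} (Alg : UAlgebra σ A) (s : A) : Prop :=
  ∀ (k : ℕ) (t : UTerm σ k) (j : Fin k), UDependsOn Alg t j →
    ∀ c : Fin k → A, Alg.eval t (Function.update c j s) = s

/-- `C(β, γ; δ)` : `β` centralizes `γ` modulo `δ`. -/
def Centralizes {σ : Signature} {A : Type} (Alg : UAlgebra σ A)
    (β γ δ : A → A → Prop) : Prop :=
  ∀ (ℓ m : ℕ) (t : UTerm σ (ℓ + m)) (a b : Fin ℓ → A) (u v : Fin m → A),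
    (∀ i, β (a i) (b i)) → (∀ i, γ (u i) (v i)) →
    (δ (Alg.eval t (Fin.append a u)) (Alg.eval t (Fin.append a v)) ↔
      δ (Alg.eval t (Fin.append b u)) (Alg.eval t (Fin.append b v)))

/-- The join `θ₁ ∨ θ₂` in the congruence lattice of `Alg`: the least congruence
containing `θ₁` and `θ₂`. -/
def conJoin {σ : Signature} {A : Type} (Alg : UAlgebra σ A)
    (θ₁ θ₂ : A → A → Prop) : A → A → Prop :=
  fun x y => ∀ θ : A → A → Prop, Alg.IsCong θ →
    (∀ a b, θ₁ a b → θ a b) → (∀ a b, θ₂ a b → θ a b) → θ x y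

/-- The setoid determined by a congruence. -/
def congSetoid {σ : Signature} {A : Type} {Alg : UAlgebra σ A}
    {δ : A → A → Prop} (h : Alg.IsCong δ) : Setoid A :=
  ⟨δ, ⟨h.1, fun hab => h.2.1 _ _ hab, fun hab hbc => h.2.2.1 _ _ _ hab hbc⟩⟩

/-- The quotient algebra `A/δ` (of a congruence-induced setoid). -/
noncomputable def quotAlgebra {σ : Signature} {A : Type} (Alg : UAlgebra σ A) (s : Setoid A) :
    UAlgebra σ (Quotient s) :=
  ⟨fun f x => Quotient.mk s (Alg.interp f (fun j => (x j).out))⟩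

/-- The image `β/δ` of a congruence `β` on the quotient `A/δ`. -/
def quotCong {A : Type} (s : Setoid A) (β : A → A → Prop) :
    Quotient s → Quotient s → Prop :=
  fun x y => ∃ a b : A, Quotient.mk s a = x ∧ Quotient.mk s b = y ∧ β a b

/-- Row-major pairing of indices: `(i, j) ↦ i * m + j`. -/
def pairIdx {l m : ℕ} (i : Fin l) (j : Fin m) : Fin (l * m) :=
  ⟨i.val * m + j.val, by
    have h1 : i.val * m + j.val < i.val * m + m := Nat.add_lt_add_left j.isLt _
    have h2 : i.val * m + m = (i.val + 1) * m := (Nat.succ_mul i.val m).symm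
    have h3 : (i.val + 1) * m ≤ l * m :=
      Nat.mul_le_mul_right m (Nat.succ_le_of_lt i.isLt)
    omega⟩

/-- Simultaneous substitution into a term. -/
def UTerm.bind {σ : Signature} {n k : ℕ} : UTerm σ n → (Fin n → UTerm σ k) → UTerm σ k
  | .var i, s => s i
  | .app f ts, s => .app f (fun j => (ts j).bind s)

/-- The star composition `f ⋆ g` of terms: the `ℓm`-ary term
`(f ⋆ g)(a₁₁,…,a_{ℓm}) = f(g(a₁₁,…,a₁ₘ), …, g(a_{ℓ1},…,a_{ℓm}))`. -/
def starTerm {σ : Signature} {l m : ℕ} (f : UTerm σ l) (g : UTerm σ m) :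
    UTerm σ (l * m) :=
  f.bind (fun i => g.bind (fun j => .var (pairIdx i j)))

/-- Star composition on arity-indexed terms. -/
def sigStar {σ : Signature} (p q : Σ k, UTerm σ k) : Σ k, UTerm σ k :=
  ⟨p.1 * q.1, starTerm p.2 q.2⟩

/-- The left-associated iterated star `p ⋆ q₀ ⋆ q₁ ⋆ ⋯`. -/
def iterStar {σ : Signature} (p : Σ k, UTerm σ k) :
    List (Σ k, UTerm σ k) → Σ k, UTerm σ k
  | [] => p
  | q :: rest => iterStar (sigStar p q) rest

/-- `B` is an absorbing subuniverse of the subalgebra with universe `R`. -/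
def AbsorbingIn {σ : Signature} {A : Type} (Alg : UAlgebra σ A) (R B : Set A) : Prop :=
  B.Nonempty ∧ B ⊆ R ∧ Alg.IsSubuniv B ∧
  ∃ (k : ℕ) (t : UTerm σ k), ∀ (j : Fin k) (x : Fin k → A),
    (∀ i, i ≠ j → x i ∈ B) → x j ∈ R → Alg.eval t x ∈ B

/-!
In a nontrivial algebra, a Taylor term depends on at least two of its arguments. Feeding it a
tuple of `R` that is already `s` on some sink coordinates in every position but one dependent
position, and in that position a tuple with value `s j₀` at a new sink coordinate `j₀`, yields a
tuple of `R` that is `s` on one more coordinate; so some `b ∈ R` equals `s` off `α`.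

Star composition of the cube terms of the `A i`, `i ∈ α`, gives a single term `C` with the same
cube identities in all of them. For `r ∈ R` and a sink coordinate `j`, plug `b` and `r` into `C`
following the cube identity of a position on which `C` depends in `A j`: on `α` the result is
still `r`, at `j` it is `s j` because `s j` is a sink, and where `b` and `r` both equal `s` it
stays `s` by idempotence. Doing this for every coordinate off `α` turns `r` into the given tuple.
-/

variable {σ : Signature}

theorem pick_zero {A : Type} (x y : A) : pick x y 0 = x := rfl

theorem pick_of_ne_zero {A : Type} (x y : A) {c : Fin 2} (hc : c ≠ 0) : pick x y c = y :=
  if_neg hc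

theorem pick_self {A : Type} (a : A) (c : Fin 2) : pick a a c = a := ite_self a

theorem pick_mem {A : Type} {B : Set A} {x y : A} (hx : x ∈ B) (hy : y ∈ B) (c : Fin 2) :
    pick x y c ∈ B := by
  unfold pick
  split_ifs <;> assumption

theorem pick_apply {ι : Type} {A : ι → Type} (x y : ∀ i, A i) (c : Fin 2) (i : ι) :
    pick x y c i = pick (x i) (y i) c := by
  unfold pick
  split_ifs <;> rfl

theorem pairIdx_eq_finProdFinEquiv {l m : ℕ} (i : Fin l) (j : Fin m) :
    pairIdx i j = finProdFinEquiv (i, j) := by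
  ext
  simp only [pairIdx, finProdFinEquiv_apply_val]
  ring

namespace UAlgebra

variable {A : Type} (Alg : UAlgebra σ A)

theorem eval_const_of_idempotent (hid : Alg.Idempotent) {m : ℕ} (t : UTerm σ m) (a : A) :
    Alg.eval t (fun _ => a) = a := by
  induction t with
  | var i => rfl
  | app f ts ih => simp only [eval, ih]; exact hid f a

theorem IsSubuniv.eval_mem {B : Set A} (hB : Alg.IsSubuniv B) {m : ℕ} (t : UTerm σ m)
    {x : Fin m → A} (hx : ∀ j, x j ∈ B) : Alg.eval t x ∈ B := by
  induction t with
  | var j => exact hx j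
  | app f ts ih => exact hB f _ ih

theorem eval_bind {m k : ℕ} (t : UTerm σ m) (sub : Fin m → UTerm σ k) (env : Fin k → A) :
    Alg.eval (t.bind sub) env = Alg.eval t (fun i => Alg.eval (sub i) env) := by
  induction t with
  | var i => rfl
  | app f ts ih => simp only [UTerm.bind, eval, ih]

theorem eval_starTerm {l m : ℕ} (f : UTerm σ l) (g : UTerm σ m) (env : Fin (l * m) → A) :
    Alg.eval (starTerm f g) env =
      Alg.eval f (fun p => Alg.eval g (fun q => env (finProdFinEquiv (p, q)))) := by
  simp only [starTerm, eval_bind, eval, pairIdx_eq_finProdFinEquiv]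

theorem eval_eq_of_forall_dependsOn {m : ℕ} (t : UTerm σ m) {x y : Fin m → A}
    (h : ∀ q, UDependsOn Alg t q → x q = y q) : Alg.eval t x = Alg.eval t y := by
  classical
  suffices key : ∀ (S : Finset (Fin m)) (z : Fin m → A), (∀ q ∉ S, z q = y q) →
      (∀ q ∈ S, ¬ UDependsOn Alg t q) → Alg.eval t z = Alg.eval t y by
    refine key (Finset.univ.filter fun q => x q ≠ y q) x (by simp) ?_
    intro q hq hdep
    exact (Finset.mem_filter.mp hq).2 (h q hdep)
  intro S
  induction S using Finset.induction_on with
  | empty => intro z hz _; rw [funext fun q => hz q (Finset.notMem_empty q)]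
  | insert a S _ ih =>
    intro z hz hS
    have hupdate : Alg.eval t z = Alg.eval t (Function.update z a (y a)) := by
      by_contra hne
      refine hS a (Finset.mem_insert_self a S) ⟨z, z a, y a, ?_⟩
      rwa [Function.update_eq_self]
    rw [hupdate]
    refine ih _ (fun q hq => ?_) fun q hq => hS q (Finset.mem_insert_of_mem hq)
    by_cases hqa : q = a
    · subst hqa
      exact Function.update_self ..
    · rw [Function.update_of_ne hqa]
      exact hz q (by simp [hqa, hq])

theorem exists_dependsOn [Nontrivial A] {m : ℕ} (t : UTerm σ m)
    (hidt : ∀ a, Alg.eval t (fun _ => a) = a) : ∃ q, UDependsOn Alg t q := by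
  obtain ⟨a, b, hab⟩ := exists_pair_ne A
  by_contra! h
  apply hab
  rw [← hidt a, ← hidt b]
  exact eval_eq_of_forall_dependsOn Alg t fun q hq => absurd hq (h q)

theorem exists_dependsOn_ne_of_taylor [Nontrivial A] {m : ℕ} (t : UTerm σ m)
    (hidt : ∀ a, Alg.eval t (fun _ => a) = a) {u v : Fin m → Fin 2} {p : Fin m}
    (hu : u p = 0) (hv : v p = 1)
    (huv : ∀ x y : A, Alg.eval t (fun j => pick x y (u j)) = Alg.eval t (fun j => pick x y (v j))) :
    ∃ q ≠ p, UDependsOn Alg t q := by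
  obtain ⟨x, y, hxy⟩ := exists_pair_ne A
  by_contra! h
  have only_p : ∀ w : Fin m → Fin 2, Alg.eval t (fun j => pick x y (w j)) = pick x y (w p) := by
    intro w
    rw [← hidt (pick x y (w p))]
    refine eval_eq_of_forall_dependsOn Alg t fun q hq => ?_
    by_cases hqp : q = p
    · rw [hqp]
    · exact absurd hq (h q hqp)
  have := huv x y
  rw [only_p, only_p, hu, hv] at this
  exact hxy this

end UAlgebra

open UAlgebra

theorem IsSink.eval_eq {A : Type} {Alg : UAlgebra σ A} {s : A} (hs : IsSink Alg s) {m : ℕ}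
    {t : UTerm σ m} {q : Fin m} (hq : UDependsOn Alg t q) {x : Fin m → A} (hxq : x q = s) :
    Alg.eval t x = s := by
  rw [← Function.update_eq_self q x, hxq]
  exact hs m t q hq x

section Family

variable {ι : Type} {A : ι → Type} (Alg : ∀ i, UAlgebra σ (A i))

theorem prodAlgebra_eval_apply {m : ℕ} (t : UTerm σ m) (x : Fin m → ∀ i, A i) (i : ι) :
    (prodAlgebra Alg).eval t x i = (Alg i).eval t (fun j => x j i) := by
  induction t with
  | var j => rfl
  | app f ts ih =>
    show (Alg i).interp f (fun j => (prodAlgebra Alg).eval (ts j) x i) = _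
    simp only [ih, eval]

def IsCubeTermOn (S : Set ι) {k : ℕ} (C : UTerm σ k) : Prop :=
  ∀ P : Fin k, ∃ W : Fin k → Fin 2, W P = 0 ∧
    ∀ i ∈ S, ∀ x y : A i, (Alg i).eval C (fun q => pick x y (W q)) = y

theorem isCubeTermOn_empty : IsCubeTermOn Alg ∅ (UTerm.var (0 : Fin 1)) :=
  fun _ => ⟨fun _ => 0, rfl, fun _ hi => absurd hi (Set.notMem_empty _)⟩

variable {Alg}

theorem IsCubeTermOn.insert {S : Set ι} {K : ℕ} {C : UTerm σ K} (hC : IsCubeTermOn Alg S C)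
    {i₀ : ι} {k : ℕ} {c : UTerm σ k} (hc : IsCubeTerm (Alg i₀) c)
    (hidem : ∀ i ∈ insert i₀ S, (Alg i).Idempotent) :
    IsCubeTermOn Alg (insert i₀ S) (starTerm C c) := by
  intro P
  obtain ⟨W₁, hW₁, hC₁⟩ := hC (finProdFinEquiv.symm P).1
  obtain ⟨W₂, hW₂, hc₂⟩ := hc.2 (finProdFinEquiv.symm P).2
  refine ⟨fun P' => if W₁ (finProdFinEquiv.symm P').1 = 0 then W₂ (finProdFinEquiv.symm P').2
    else 1, by simp only [hW₁, hW₂, if_true], fun i hi x y => ?_⟩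
  have block : ∀ p, (Alg i).eval c (fun q => pick x y (if W₁ p = 0 then W₂ q else 1)) =
      pick ((Alg i).eval c fun q => pick x y (W₂ q)) y (W₁ p) := by
    intro p
    by_cases h : W₁ p = 0
    · simp only [h, if_true, pick_zero]
    · simp only [h, if_false, pick_of_ne_zero _ _ h, pick_of_ne_zero _ _ one_ne_zero]
      exact eval_const_of_idempotent _ (hidem i hi) c y
  simp only [eval_starTerm, Equiv.symm_apply_apply, block]
  rcases hi with rfl | hi
  · simp only [hc₂ x y, pick_self]
    exact eval_const_of_idempotent _ (hidem _ (Set.mem_insert _ _)) C y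
  · exact hC₁ i hi _ y

theorem exists_isCubeTermOn {S : Set ι} (hS : S.Finite) (hidem : ∀ i ∈ S, (Alg i).Idempotent)
    (hcube : ∀ i ∈ S, ∃ (k : ℕ) (c : UTerm σ k), IsCubeTerm (Alg i) c) :
    ∃ (K : ℕ) (C : UTerm σ K), IsCubeTermOn Alg S C := by
  induction S, hS using Set.Finite.induction_on with
  | empty => exact ⟨1, _, isCubeTermOn_empty Alg⟩
  | @insert i₀ S _ _ ih =>
    obtain ⟨K, C, hC⟩ := ih (fun i hi => hidem i (.inr hi)) fun i hi => hcube i (.inr hi)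
    obtain ⟨k, c, hc⟩ := hcube i₀ (.inl rfl)
    exact ⟨_, _, hC.insert hc hidem⟩

theorem IsSubdirect.exists_mem_eq_sink {R : Set (∀ i, A i)} (hR : IsSubdirect Alg R) {nt : ℕ}
    {t : UTerm σ nt} (ht : IsTaylorFamily Alg t) {Q : Set ι} (hQ : Q.Finite) {s : ∀ i, A i}
    (hsink : ∀ j ∈ Q, IsSink (Alg j) (s j)) : ∃ b ∈ R, ∀ j ∈ Q, b j = s j := by
  obtain ⟨u, v, huv, htay⟩ := ht
  induction Q, hQ using Set.Finite.induction_on with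
  | empty =>
    obtain ⟨r, hr⟩ := hR.1
    exact ⟨r, hr, fun _ hj => absurd hj (Set.notMem_empty _)⟩
  | @insert j₀ Q _ _ ih =>
    obtain ⟨d, hd, hds⟩ := ih fun j hj => hsink j (.inr hj)
    rcases subsingleton_or_nontrivial (A j₀) with _ | _
    · exact ⟨d, hd, by rintro j (rfl | hj); exacts [Subsingleton.elim _ _, hds j hj]⟩
    obtain ⟨p, hp⟩ := exists_dependsOn (Alg j₀) t (htay j₀).1
    obtain ⟨z, hz, hzs⟩ := hR.2.2 j₀ (s j₀)
    refine ⟨(prodAlgebra Alg).eval t (Function.update (fun _ => d) p z),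
      hR.2.1.eval_mem _ t fun q => ?_, ?_⟩
    · by_cases hqp : q = p
      · simpa [hqp] using hz
      · simpa [hqp] using hd
    rintro j (rfl | hj) <;> rw [prodAlgebra_eval_apply]
    · exact (hsink j (.inl rfl)).eval_eq hp (by simp [hzs])
    · rcases subsingleton_or_nontrivial (A j) with _ | _
      · exact Subsingleton.elim _ _
      obtain ⟨q, hqp, hq⟩ := exists_dependsOn_ne_of_taylor (Alg j) t (htay j).1 (huv p).1
        (huv p).2 ((htay j).2 p)
      exact (hsink j (.inr hj)).eval_eq hq (by simp [hqp, hds j hj])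

theorem exists_mem_eqOn_of_isCubeTermOn {R : Set (∀ i, A i)} (hR : (prodAlgebra Alg).IsSubuniv R)
    {α : Set ι} {K : ℕ} {C : UTerm σ K} (hC : IsCubeTermOn Alg α C) {Q : Set ι} (hQ : Q.Finite)
    (hidem : ∀ j ∈ Q, (Alg j).Idempotent) {s : ∀ i, A i} (hsink : ∀ j ∈ Q, IsSink (Alg j) (s j))
    {b r : ∀ i, A i} (hb : b ∈ R) (hbs : ∀ j ∈ Q, b j = s j) (hr : r ∈ R) :
    ∃ w ∈ R, (∀ i ∈ α, w i = r i) ∧ ∀ j ∈ Q, w j = s j := by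
  induction Q, hQ using Set.Finite.induction_on with
  | empty => exact ⟨r, hr, fun _ _ => rfl, fun _ hj => absurd hj (Set.notMem_empty _)⟩
  | @insert j₀ Q _ _ ih =>
    obtain ⟨w, hw, hwr, hws⟩ := ih (fun j hj => hidem j (.inr hj))
      (fun j hj => hsink j (.inr hj)) fun j hj => hbs j (.inr hj)
    rcases subsingleton_or_nontrivial (A j₀) with _ | _
    · exact ⟨w, hw, hwr, by rintro j (rfl | hj); exacts [Subsingleton.elim _ _, hws j hj]⟩
    obtain ⟨P, hP⟩ := exists_dependsOn (Alg j₀) C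
      (eval_const_of_idempotent _ (hidem j₀ (.inl rfl)) C)
    obtain ⟨W, hWP, hW⟩ := hC P
    refine ⟨(prodAlgebra Alg).eval C (fun q => pick b w (W q)),
      hR.eval_mem _ C fun q => pick_mem hb hw _, fun i hi => ?_, ?_⟩
    · rw [prodAlgebra_eval_apply]
      simp only [pick_apply, hW i hi, hwr i hi]
    rintro j (rfl | hj) <;> simp only [prodAlgebra_eval_apply, pick_apply]
    · exact (hsink j (.inl rfl)).eval_eq hP (by rw [hWP, pick_zero, hbs j (.inl rfl)])
    · simp only [hbs j (.inr hj), hws j hj, pick_self]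
      exact eval_const_of_idempotent _ (hidem j (.inr hj)) C (s j)

end Family

theorem cube_sink_subuniverse_general
    {σ : Signature} {n : ℕ} {A : Fin n → Type}
    (Alg : ∀ i, UAlgebra σ (A i))
    (hidem : ∀ i, (Alg i).Idempotent)
    {nt : ℕ} (t : UTerm σ nt) (ht : IsTaylorFamily Alg t)
    (α : Set (Fin n))
    (hcube : ∀ i ∈ α, ∃ (k : ℕ) (c : UTerm σ k), IsCubeTerm (Alg i) c)
    (s : ∀ i, A i) (hsink : ∀ j ∉ α, IsSink (Alg j) (s j))
    (R : Set (∀ i, A i)) (hR : IsSubdirect Alg R) :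
    ∀ x : ∀ i, A i,
      (∃ r ∈ R, ∀ i ∈ α, r i = x i) → (∀ j ∉ α, x j = s j) → x ∈ R := by
  rintro x ⟨r, hr, hrx⟩ hxs
  obtain ⟨K, C, hC⟩ := exists_isCubeTermOn α.toFinite (fun i _ => hidem i) hcube
  obtain ⟨b, hb, hbs⟩ := hR.exists_mem_eq_sink ht αᶜ.toFinite hsink
  obtain ⟨w, hw, hwr, hws⟩ := exists_mem_eqOn_of_isCubeTermOn hR.2.1 hC αᶜ.toFinite
    (fun j _ => hidem j) hsink hb hbs hr
  convert hw using 1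
  funext i
  by_cases hi : i ∈ α
  · rw [hwr i hi, hrx i hi]
  · rw [hws i hi, hxs i hi]

/-- Cube terms on `α`, sinks off `α`: `Proj_α R × {s}` is contained in `R`
(hence is a subuniverse of `R`). -/
theorem cube_sink_subuniverse
    {σ : Signature} {n : ℕ} {A : Fin n → Type} [∀ i, Finite (A i)]
    (Alg : ∀ i, UAlgebra σ (A i))
    (hidem : ∀ i, (Alg i).Idempotent)
    {nt : ℕ} (t : UTerm σ nt) (ht : IsTaylorFamily Alg t)
    (α : Set (Fin n)) (hane : α.Nonempty) (haproper : α ≠ Set.univ)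
    (hcube : ∀ i ∈ α, ∃ (k : ℕ) (c : UTerm σ k), IsCubeTerm (Alg i) c)
    (s : ∀ i, A i) (hsink : ∀ j ∉ α, IsSink (Alg j) (s j))
    (R : Set (∀ i, A i)) (hR : IsSubdirect Alg R) :
    ∀ x : ∀ i, A i,
      (∃ r ∈ R, ∀ i ∈ α, r i = x i) → (∀ j ∉ α, x j = s j) → x ∈ R :=
  cube_sink_subuniverse_general Alg hidem t ht α hcube s hsink R hR
end

section
/- A finite commutative idempotent binar A has a cube-term blocker if and only if the two-element semilattice S2 belongs to HS(A) (i.e., S2 is a homomorphic image of some subalgebra of A). -/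
/-- Terms of a single binary operation (elements of the free magma) in `n` variables. -/
inductive MTerm : ℕ → Type
  | var : ∀ {n}, Fin n → MTerm n
  | mul : ∀ {n}, MTerm n → MTerm n → MTerm n

namespace MTerm

/-- Realization of a magma term in a type with a binary operation. -/
def eval {A : Type} [Mul A] {n : ℕ} : MTerm n → (Fin n → A) → A
  | var i, env => env i
  | mul s t, env => s.eval env * t.eval env

end MTerm

/-- A commutative idempotent binar: a single binary operation that is
commutative and idempotent. -/
def IsCIB (A : Type) [Mul A] : Prop :=
  (∀ x y : A, x * y = y * x) ∧ ∀ x : A, x * x = x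

/-- `t` is a `(k+1)`-ary edge term for `A`:
`t(y,y,x,…,x) ≈ x`, `t(y,x,y,x,…,x) ≈ x`, and `t(x,…,x,y,x,…,x) ≈ x`
for `y` in any position `j` with `4 ≤ j ≤ k+1` (1-indexed). -/
def IsEdgeTerm (A : Type) [Mul A] {k : ℕ} (t : MTerm (k + 1)) : Prop :=
  ∀ x y : A,
    (t.eval (fun i => if i.val ≤ 1 then y else x) = x) ∧
    (t.eval (fun i => if i.val = 0 ∨ i.val = 2 then y else x) = x) ∧
    ∀ j : Fin (k + 1), 3 ≤ j.val → t.eval (fun i => if i = j then y else x) = x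

/-- `A` has an edge term. -/
def HasEdgeTerm (A : Type) [Mul A] : Prop :=
  ∃ k : ℕ, 1 < k ∧ ∃ t : MTerm (k + 1), IsEdgeTerm A t

/-- The two-element meet-semilattice `S₂` is a homomorphic image of a
subalgebra of `A` (identifying `S₂` with `Bool` under `&&`). -/
def S2inHS (A : Type) [Mul A] : Prop :=
  ∃ (B : Set A) (h : A → Bool),
    (∀ x ∈ B, ∀ y ∈ B, x * y ∈ B) ∧
    (∀ x ∈ B, ∀ y ∈ B, h (x * y) = (h x && h y)) ∧
    (∃ b ∈ B, h b = false) ∧ (∃ b ∈ B, h b = true)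

/-- `A` has a cube-term blocker: a pair `(D, S)` of subuniverses with
`∅ ≠ D ⊊ S ⊆ A` such that every `n`-ary term has a coordinate `i` with:
any tuple from `S` whose `i`-th entry lies in `D` is mapped into `D`. -/
def HasCTB (A : Type) [Mul A] : Prop :=
  ∃ D S : Set A, D.Nonempty ∧ D ⊆ S ∧ D ≠ S ∧
    (∀ x ∈ D, ∀ y ∈ D, x * y ∈ D) ∧ (∀ x ∈ S, ∀ y ∈ S, x * y ∈ S) ∧
    ∀ (n : ℕ) (t : MTerm n), ∃ i : Fin n, ∀ s : Fin n → A,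
      (∀ j, s j ∈ S) → s i ∈ D → t.eval s ∈ D

/-- A CIB is abelian if for every `(ℓ+m)`-ary term operation `t` and all tuples
`a b, u v`: `t(a,u) = t(a,v) ↔ t(b,u) = t(b,v)`. -/
def CIBAbelian (A : Type) [Mul A] : Prop :=
  ∀ (l m : ℕ) (t : MTerm (l + m)) (a b : Fin l → A) (u v : Fin m → A),
    (t.eval (Fin.append a u) = t.eval (Fin.append a v) ↔
      t.eval (Fin.append b u) = t.eval (Fin.append b v))

/-
If `(D, S)` is a cube-term blocker, the blocking coordinate of the binary term
`x * y` shows, by commutativity, that `D` absorbs `S`; for any `a ∈ S \ D` the set `D ∪ {a}`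
is then a subalgebra, and since `a * a = a` the map sending `D` to `0` and `a` to `1` is a
homomorphism onto `S₂`. Conversely, if `h : B → S₂` is a homomorphism, then `(h⁻¹(0), B)` is a
cube-term blocker: a product of elements of `B` lies in `h⁻¹(0)` as soon as one factor does, so
any variable occurring in a term (say the leftmost) is a blocking coordinate.
-/

namespace MTerm

variable {A : Type} [Mul A]

def leftmostVar {n : ℕ} : MTerm n → Fin n
  | .var i => i
  | .mul u _ => u.leftmostVar

theorem eval_mem {B : Set A} (hB : ∀ x ∈ B, ∀ y ∈ B, x * y ∈ B) {n : ℕ} (t : MTerm n)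
    {s : Fin n → A} (hs : ∀ j, s j ∈ B) : t.eval s ∈ B := by
  induction t with
  | var i => exact hs i
  | mul u v ihu ihv => exact hB _ ihu _ ihv

theorem eval_eq_false_of_leftmostVar {B : Set A} {h : A → Bool}
    (hB : ∀ x ∈ B, ∀ y ∈ B, x * y ∈ B) (hh : ∀ x ∈ B, ∀ y ∈ B, h (x * y) = (h x && h y))
    {n : ℕ} (t : MTerm n) {s : Fin n → A} (hs : ∀ j, s j ∈ B)
    (hfalse : h (s t.leftmostVar) = false) : h (t.eval s) = false := by
  induction t with
  | var i => exact hfalse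
  | mul u v ihu _ =>
    rw [eval, hh _ (u.eval_mem hB hs) _ (v.eval_mem hB hs), ihu hfalse, Bool.false_and]

end MTerm

section

variable {A : Type} [Mul A]

theorem mul_mem_of_blocks_mul {D S : Set A} (hcomm : ∀ x y : A, x * y = y * x) (hDS : D ⊆ S)
    (hblock : ∃ i : Fin 2, ∀ s : Fin 2 → A, (∀ j, s j ∈ S) → s i ∈ D →
      (MTerm.mul (.var 0) (.var 1)).eval s ∈ D)
    {x y : A} (hx : x ∈ D) (hy : y ∈ S) : x * y ∈ D := by
  obtain ⟨i, hi⟩ := hblock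
  fin_cases i
  · exact hi ![x, y] (Fin.forall_fin_two.2 ⟨hDS hx, hy⟩) hx
  · rw [hcomm]
    exact hi ![y, x] (Fin.forall_fin_two.2 ⟨hy, hDS hx⟩) hx

theorem s2inHS_of_mul_mem {D : Set A} {a : A} (hcomm : ∀ x y : A, x * y = y * x)
    (haa : a * a = a) (hD : D.Nonempty) (hDmul : ∀ x ∈ D, ∀ y ∈ D, x * y ∈ D)
    (hDa : ∀ x ∈ D, x * a ∈ D) (ha : a ∉ D) : S2inHS A := by
  classical
  have hmul : ∀ x ∈ insert a D, ∀ y ∈ insert a D, x ∈ D ∨ y ∈ D → x * y ∈ D := by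
    rintro x (rfl | hx) y (rfl | hy) hxy
    · exact absurd (hxy.elim id id) ha
    · exact hcomm y x ▸ hDa y hy
    · exact hDa x hx
    · exact hDmul x hx y hy
  refine ⟨insert a D, fun z => decide (z ∉ D), ?_, ?_, ?_, ?_⟩
  · rintro x hx y hy
    by_cases hxy : x ∈ D ∨ y ∈ D
    · exact Or.inr (hmul x hx y hy hxy)
    · obtain ⟨rfl, rfl⟩ : x = a ∧ y = a :=
        ⟨hx.resolve_right (hxy ∘ Or.inl), hy.resolve_right (hxy ∘ Or.inr)⟩
      exact Or.inl haa
  · rintro x hx y hy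
    by_cases hxy : x ∈ D ∨ y ∈ D
    · have := hmul x hx y hy hxy
      rcases hxy with hxy | hxy <;> simp [this, hxy]
    · obtain ⟨rfl, rfl⟩ : x = a ∧ y = a :=
        ⟨hx.resolve_right (hxy ∘ Or.inl), hy.resolve_right (hxy ∘ Or.inr)⟩
      simp [haa, ha]
  · obtain ⟨d, hd⟩ := hD
    exact ⟨d, Or.inr hd, by simp [hd]⟩
  · exact ⟨a, Or.inl rfl, by simp [ha]⟩

theorem hasCTB_of_s2inHS (hS₂ : S2inHS A) : HasCTB A := by
  obtain ⟨B, h, hB, hh, ⟨b₀, hb₀B, hb₀⟩, ⟨b₁, hb₁B, hb₁⟩⟩ := hS₂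
  refine ⟨{x ∈ B | h x = false}, B, ⟨b₀, hb₀B, hb₀⟩, fun x hx => hx.1, ?_, ?_, hB, ?_⟩
  · exact fun hDB => by simpa [hb₁] using ((Set.ext_iff.1 hDB b₁).2 hb₁B).2
  · rintro x ⟨hxB, hx⟩ y ⟨hyB, -⟩
    exact ⟨hB x hxB y hyB, by rw [hh x hxB y hyB, hx, Bool.false_and]⟩
  · exact fun n t => ⟨t.leftmostVar, fun s hs hsD =>
      ⟨t.eval_mem hB hs, t.eval_eq_false_of_leftmostVar hB hh hs hsD.2⟩⟩

end

theorem cib_ctb_iff_S2_general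
    (A : Type) [Mul A] (hA : IsCIB A) :
    HasCTB A ↔ S2inHS A := by
  refine ⟨?_, hasCTB_of_s2inHS⟩
  rintro ⟨D, S, hD, hDS, hDS_ne, hDmul, -, hblock⟩
  obtain ⟨a, haS, haD⟩ := Set.exists_of_ssubset (hDS.ssubset_of_ne hDS_ne)
  exact s2inHS_of_mul_mem hA.1 (hA.2 a) hD hDmul
    (fun x hx => mul_mem_of_blocks_mul hA.1 hDS (hblock 2 _) hx haS) haD

/-- A finite CIB has a cube-term blocker iff `S₂ ∈ HS(A)`. -/
theorem cib_ctb_iff_S2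
    (A : Type) [Mul A] [Finite A] (hA : IsCIB A) :
    HasCTB A ↔ S2inHS A :=
  cib_ctb_iff_S2_general A hA
end

section
/- Every finite abelian commutative idempotent binar has odd cardinality. -/
/-!
Abelianness applied to the term `x * y` makes every left translation of `A` injective, hence
bijective as `A` is finite. Fixing `b`, the map sending `x` to the unique `y` with `x * y = b`
is then an involution by commutativity, and by idempotence its only fixed point is `b`.
-/

open Function

theorem Function.Involutive.odd_card_of_fixedPoints_eq_singleton {α : Type*} [Finite α]
    {f : α → α} (hf : Involutive f) {b : α} (hfix : fixedPoints f = {b}) :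
    Odd (Nat.card α) := by
  classical
  cases nonempty_fintype α
  have hmod : Fintype.card α ≡ Fintype.card (fixedPoints f) [MOD 2] :=
    Equiv.Perm.card_fixedPoints_modEq (p := 2) (n := 1) (f := (f : Function.End α)) (funext hf)
  rw [← Nat.card_eq_fintype_card, ← Nat.card_eq_fintype_card, hfix,
    Nat.card_unique (α := ({b} : Set α))] at hmod
  exact Nat.odd_iff.mpr hmod

namespace IsCIB

variable {A : Type} [Mul A]

theorem mul_left_injective_of_abelian (hA : IsCIB A) (hab : CIBAbelian A) (a : A) :
    Injective (a * ·) := by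
  intro u v h
  have hmul (w : A) : w * u = w * v :=
    (hab 1 1 (.mul (.var 0) (.var 1)) ![a] ![w] ![u] ![v]).mp h
  calc u = u * u := (hA.2 u).symm
    _ = u * v := hmul u
    _ = v * u := hA.1 u v
    _ = v * v := hmul v
    _ = v := hA.2 v

theorem odd_card_of_mul_left_injective [Finite A] [Nonempty A] (hA : IsCIB A)
    (hinj : ∀ a : A, Injective (a * ·)) : Odd (Nat.card A) := by
  obtain ⟨b⟩ := ‹Nonempty A›
  have hdiv (x : A) : ∃ y, x * y = b := Finite.surjective_of_injective (hinj x) b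
  choose σ hσ using hdiv
  have hσ_involutive : Involutive σ := fun x =>
    hinj (σ x) <| show σ x * σ (σ x) = σ x * x by rw [hσ, hA.1, hσ]
  refine hσ_involutive.odd_card_of_fixedPoints_eq_singleton (b := b)
    (Set.eq_singleton_iff_unique_mem.mpr ⟨?_, fun x hx => ?_⟩)
  · exact hinj b <| show b * σ b = b * b by rw [hσ, hA.2]
  · simpa only [hx.eq, hA.2] using hσ x

end IsCIB

/-- Every finite abelian CIB has odd cardinality. -/
theorem cib_abelian_odd
    (A : Type) [Mul A] [Finite A] [Nonempty A]
    (hA : IsCIB A) (hab : CIBAbelian A) :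
    Odd (Nat.card A) :=
  hA.odd_card_of_mul_left_injective (hA.mul_left_injective_of_abelian hab)
end
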